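/- Let M ≥ 1 be an integer, let 0 < λ ≤ M − 1, and let G̃ ~ Poisson(λ). Then E[ (G̃/M)·log(G̃/M) · 1{G̃ > M} ] = Σ_{g=M+1}^{∞} P[G̃ = g]·(g/M)·log(g/M) ≤ (λ^{3/2}/M²) · √(P[G̃ ≥ M]). Consequently, if additionally λ ≤ M/10 then this quantity is at most e^{−M/2}; i.e., for f(g) := −(g/M)·log(g/M) and its nonnegative part f⁺(g) := max(f(g),0), one has 0 ≤ E[f⁺(G̃)] − E[f(G̃)] ≤ e^{−M/2}. -/

import Mathlib

open Real BigOperators Finset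
open scoped Classical

noncomputable section

/-- The Poisson probability mass function with mean `lam`. -/
def poissonP (lam : ℝ) (n : ℕ) : ℝ := Real.exp (-lam) * lam ^ n / n.factorial

set_option maxHeartbeats 1000000

namespace PoisAux

lemma poissonP_eq (lam : ℝ) (n : ℕ) :
    poissonP lam n = Real.exp (-lam) * (lam ^ n / n.factorial) := by
  unfold poissonP; rw [mul_div_assoc]

lemma poissonP_nonneg {lam : ℝ} (h : 0 ≤ lam) (n : ℕ) : 0 ≤ poissonP lam n := by
  unfold poissonP; positivity

lemma exp_tsum (x : ℝ) : ∑' n : ℕ, x ^ n / (n.factorial : ℝ) = Real.exp x := by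
  rw [Real.exp_eq_exp_ℝ, NormedSpace.exp_eq_tsum_div]

lemma pois_summable (lam : ℝ) : Summable (poissonP lam) := by
  have := (Real.summable_pow_div_factorial lam).mul_left (Real.exp (-lam))
  exact this.congr fun n => (poissonP_eq lam n).symm

lemma pois_tsum (lam : ℝ) : ∑' n, poissonP lam n = 1 := by
  calc ∑' n, poissonP lam n = ∑' n, Real.exp (-lam) * (lam ^ n / n.factorial) :=
        tsum_congr fun n => poissonP_eq lam n
    _ = Real.exp (-lam) * ∑' n : ℕ, lam ^ n / (n.factorial : ℝ) := tsum_mul_left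
    _ = Real.exp (-lam) * Real.exp lam := by rw [exp_tsum]
    _ = 1 := by rw [← Real.exp_add]; simp

lemma pois_succ (lam : ℝ) (n : ℕ) :
    poissonP lam (n + 1) * ((n : ℝ) + 1) = lam * poissonP lam n := by
  unfold poissonP
  have h1 : ((n + 1).factorial : ℝ) = ((n : ℝ) + 1) * n.factorial := by
    rw [Nat.factorial_succ]; push_cast; ring
  have h2 : (n.factorial : ℝ) ≠ 0 := Nat.cast_ne_zero.mpr n.factorial_ne_zero
  have h3 : ((n : ℝ) + 1) ≠ 0 := by positivity
  rw [h1, pow_succ]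
  field_simp

lemma pois_summable_mul_id (lam : ℝ) :
    Summable (fun n : ℕ => poissonP lam n * n) := by
  rw [← summable_nat_add_iff 1]
  have : (fun n : ℕ => poissonP lam (n + 1) * ((n + 1 : ℕ) : ℝ))
      = fun n : ℕ => lam * poissonP lam n := by
    funext n; push_cast; rw [pois_succ]
  exact this ▸ (pois_summable lam).mul_left lam

lemma pois_m1 (lam : ℝ) : ∑' n, poissonP lam n * n = lam := by
  rw [Summable.tsum_eq_zero_add (pois_summable_mul_id lam)]
  have : (fun n : ℕ => poissonP lam (n + 1) * ((n + 1 : ℕ) : ℝ))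
      = fun n : ℕ => lam * poissonP lam n := by
    funext n; push_cast; rw [pois_succ]
  simp only [Nat.cast_zero, mul_zero, zero_add]
  calc ∑' n : ℕ, poissonP lam (n + 1) * ((n + 1 : ℕ) : ℝ)
      = ∑' n : ℕ, lam * poissonP lam n := by rw [this]
    _ = lam * ∑' n, poissonP lam n := tsum_mul_left
    _ = lam := by rw [pois_tsum]; ring

lemma pois_succ2 (lam : ℝ) (n : ℕ) :
    poissonP lam (n + 2) * ((((n : ℝ)) + 2) * (((n : ℝ)) + 1)) = lam ^ 2 * poissonP lam n := by
  have h1 := pois_succ lam (n + 1)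
  have h2 := pois_succ lam n
  push_cast at h1
  linear_combination ((n : ℝ) + 1) * h1 + lam * h2

lemma pois_summable_mul_sq (lam : ℝ) :
    Summable (fun n : ℕ => poissonP lam n * ((n : ℝ) * ((n : ℝ) - 1))) := by
  rw [← summable_nat_add_iff 2]
  have : (fun n : ℕ => poissonP lam (n + 2) * (((n + 2 : ℕ) : ℝ) * (((n + 2 : ℕ) : ℝ) - 1)))
      = fun n : ℕ => lam ^ 2 * poissonP lam n := by
    funext n
    have := pois_succ2 lam n
    push_cast
    linear_combination this
  rw [this]
  exact (pois_summable lam).mul_left (lam ^ 2)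

lemma pois_m2 (lam : ℝ) :
    ∑' n, poissonP lam n * ((n : ℝ) * ((n : ℝ) - 1)) = lam ^ 2 := by
  have hs := pois_summable_mul_sq lam
  have hsplit := Summable.sum_add_tsum_nat_add
    (f := fun n : ℕ => poissonP lam n * ((n : ℝ) * ((n : ℝ) - 1))) 2 hs
  have hfin : ∑ i ∈ range 2, poissonP lam i * ((i : ℝ) * ((i : ℝ) - 1)) = 0 := by
    simp [Finset.sum_range_succ]
  have htail : ∑' n : ℕ, poissonP lam (n + 2) * (((n + 2 : ℕ) : ℝ) * (((n + 2 : ℕ) : ℝ) - 1))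
      = lam ^ 2 := by
    have heq : (fun n : ℕ => poissonP lam (n + 2) * (((n + 2 : ℕ) : ℝ) * (((n + 2 : ℕ) : ℝ) - 1)))
        = fun n : ℕ => lam ^ 2 * poissonP lam n := by
      funext n
      have := pois_succ2 lam n
      push_cast
      linear_combination this
    rw [heq, tsum_mul_left, pois_tsum]
    ring
  rw [hfin, zero_add] at hsplit
  rw [← hsplit]
  exact htail


lemma pois_summable_sq1 (lam : ℝ) :
    Summable (fun n : ℕ => poissonP lam n * ((n : ℝ) ^ 2 + 1)) := by
  have h := ((pois_summable_mul_sq lam).add (pois_summable_mul_id lam)).add (pois_summable lam)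
  refine h.congr fun n => ?_
  ring

/-- Comparison criterion: `p·q` is summable whenever `|q| ≤ C(n²+1)`. -/
lemma summable_p_mul {lam : ℝ} (hl : 0 ≤ lam) {q : ℕ → ℝ} {C : ℝ}
    (hq : ∀ n, |q n| ≤ C * ((n : ℝ) ^ 2 + 1)) :
    Summable (fun n => poissonP lam n * q n) := by
  have hmaj : Summable (fun n : ℕ => C * (poissonP lam n * ((n : ℝ) ^ 2 + 1))) :=
    (pois_summable_sq1 lam).mul_left C
  refine Summable.of_abs (hmaj.of_nonneg_of_le (fun n => abs_nonneg _) fun n => ?_)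
  rw [abs_mul, abs_of_nonneg (poissonP_nonneg hl n)]
  calc poissonP lam n * |q n| ≤ poissonP lam n * (C * ((n : ℝ) ^ 2 + 1)) :=
        mul_le_mul_of_nonneg_left (hq n) (poissonP_nonneg hl n)
    _ = C * (poissonP lam n * ((n : ℝ) ^ 2 + 1)) := by ring

/-- Second moment about an arbitrary point. -/
lemma pois_mom2 (lam : ℝ) (a : ℝ) :
    ∑' n, poissonP lam n * ((n : ℝ) - a) ^ 2 = lam + (lam - a) ^ 2 := by
  have key : (fun n : ℕ => poissonP lam n * ((n : ℝ) - a) ^ 2)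
      = fun n : ℕ => (poissonP lam n * ((n : ℝ) * ((n : ℝ) - 1))
          + (1 - 2 * a) * (poissonP lam n * (n : ℝ))) + a ^ 2 * poissonP lam n := by
    funext n; ring
  rw [key, Summable.tsum_add (((pois_summable_mul_sq lam)).add
      ((pois_summable_mul_id lam).mul_left _)) ((pois_summable lam).mul_left _),
    Summable.tsum_add (pois_summable_mul_sq lam) ((pois_summable_mul_id lam).mul_left _),
    tsum_mul_left, tsum_mul_left, pois_m2, pois_m1, pois_tsum]
  ring

/-- First moment about a point. -/
lemma pois_mom1 (lam : ℝ) (a : ℝ) :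
    ∑' n, poissonP lam n * (a - (n : ℝ)) = a - lam := by
  have key : (fun n : ℕ => poissonP lam n * (a - (n : ℝ)))
      = fun n : ℕ => a * poissonP lam n + (-1) * (poissonP lam n * (n : ℝ)) := by
    funext n; ring
  rw [key, Summable.tsum_add ((pois_summable lam).mul_left _) ((pois_summable_mul_id lam).mul_left _),
    tsum_mul_left, tsum_mul_left, pois_m1, pois_tsum]
  ring

/-- Cauchy–Schwarz for `tsum` in the weighted form we need. -/
lemma tsum_cs {w x : ℕ → ℝ} (hw : ∀ n, 0 ≤ w n) (hx : ∀ n, 0 ≤ x n)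
    (h1 : Summable (fun n => w n * x n)) (h2 : Summable (fun n => w n * x n ^ 2))
    (h3 : Summable w) :
    ∑' n, w n * x n ≤ Real.sqrt (∑' n, w n * x n ^ 2) * Real.sqrt (∑' n, w n) := by
  have hA : 0 ≤ ∑' n, w n * x n ^ 2 := tsum_nonneg fun n => mul_nonneg (hw n) (sq_nonneg _)
  have hB : 0 ≤ ∑' n, w n := tsum_nonneg hw
  refine Summable.tsum_le_of_sum_le h1 fun s => ?_
  have key : (∑ i ∈ s, w i * x i) ^ 2 ≤ (∑ i ∈ s, w i * x i ^ 2) * ∑ i ∈ s, w i := by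
    have h := sum_mul_sq_le_sq_mul_sq s (fun i => Real.sqrt (w i) * x i)
      (fun i => Real.sqrt (w i))
    have e1 : ∑ i ∈ s, (Real.sqrt (w i) * x i) * Real.sqrt (w i) = ∑ i ∈ s, w i * x i := by
      refine Finset.sum_congr rfl fun i _ => ?_
      rw [mul_comm (Real.sqrt (w i)) (x i), mul_assoc, Real.mul_self_sqrt (hw i)]
      ring
    have e2 : ∑ i ∈ s, (Real.sqrt (w i) * x i) ^ 2 = ∑ i ∈ s, w i * x i ^ 2 := by
      refine Finset.sum_congr rfl fun i _ => ?_
      rw [mul_pow, Real.sq_sqrt (hw i)]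
    have e3 : ∑ i ∈ s, (Real.sqrt (w i)) ^ 2 = ∑ i ∈ s, w i := by
      refine Finset.sum_congr rfl fun i _ => ?_
      rw [Real.sq_sqrt (hw i)]
    rw [e1, e2, e3] at h
    exact h
  have hs1 : ∑ i ∈ s, w i * x i ^ 2 ≤ ∑' n, w n * x n ^ 2 :=
    Summable.sum_le_tsum s (fun i _ => mul_nonneg (hw i) (sq_nonneg _)) h2
  have hs2 : ∑ i ∈ s, w i ≤ ∑' n, w n := Summable.sum_le_tsum s (fun i _ => hw i) h3
  have hnn : 0 ≤ ∑ i ∈ s, w i * x i := Finset.sum_nonneg fun i _ => mul_nonneg (hw i) (hx i)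
  have hnn2 : 0 ≤ ∑ i ∈ s, w i * x i ^ 2 := Finset.sum_nonneg fun i _ => mul_nonneg (hw i) (sq_nonneg _)
  calc ∑ i ∈ s, w i * x i = Real.sqrt ((∑ i ∈ s, w i * x i) ^ 2) := (Real.sqrt_sq hnn).symm
    _ ≤ Real.sqrt ((∑' n, w n * x n ^ 2) * ∑' n, w n) := by
        apply Real.sqrt_le_sqrt
        calc (∑ i ∈ s, w i * x i) ^ 2 ≤ (∑ i ∈ s, w i * x i ^ 2) * ∑ i ∈ s, w i := key
          _ ≤ (∑' n, w n * x n ^ 2) * ∑' n, w n := by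
              apply mul_le_mul hs1 hs2 (Finset.sum_nonneg fun i _ => hw i) hA
    _ = Real.sqrt (∑' n, w n * x n ^ 2) * Real.sqrt (∑' n, w n) := Real.sqrt_mul hA _

/-- Tail of a summable series as a tsum of an indicator. -/
lemma tsum_indicator_tail {f : ℕ → ℝ} (hf : Summable f) (k : ℕ) :
    ∑' g, {g : ℕ | k ≤ g}.indicator f g = ∑' n, f (n + k) := by
  have hlowz : ∀ b ∉ range k, (fun g => if g < k then f g else 0) b = 0 := by
    intro b hb
    simp only [Finset.mem_range, not_lt] at hb
    simp [not_lt.mpr hb]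
  have hlow : Summable (fun g : ℕ => if g < k then f g else 0) :=
    summable_of_ne_finset_zero hlowz
  have hdec : {g : ℕ | k ≤ g}.indicator f
      = fun g => f g - (if g < k then f g else 0) := by
    funext g
    by_cases h : k ≤ g
    · simp [Set.indicator_of_mem, h, not_lt.mpr h]
    · push_neg at h
      simp [Set.indicator_of_notMem, not_le.mpr h, h]
  rw [hdec, Summable.tsum_sub hf hlow]
  have hlowsum : ∑' g : ℕ, (if g < k then f g else 0) = ∑ i ∈ range k, f i := by
    rw [tsum_eq_sum hlowz]
    exact Finset.sum_congr rfl fun i hi => by simp [Finset.mem_range.mp hi]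
  rw [hlowsum]
  have := Summable.sum_add_tsum_nat_add (f := f) k hf
  linarith [this]


lemma pois_tail_le_pow {lam : ℝ} (hl : 0 ≤ lam) (M : ℕ) :
    ∑' n, poissonP lam (n + M) ≤ lam ^ M / M.factorial := by
  have hterm : ∀ n : ℕ, poissonP lam (n + M)
      ≤ lam ^ M / M.factorial * (Real.exp (-lam) * (lam ^ n / n.factorial)) := by
    intro n
    rw [poissonP_eq]
    have hfacpos : (0 : ℝ) < ((n + M).factorial : ℝ) := by
      exact_mod_cast (n + M).factorial_pos
    have hle : ((n.factorial * M.factorial : ℕ) : ℝ) ≤ ((n + M).factorial : ℝ) := by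
      exact_mod_cast Nat.le_of_dvd (n + M).factorial_pos
        (Nat.factorial_mul_factorial_dvd_factorial_add n M)
    have hprodpos : (0 : ℝ) < ((n.factorial * M.factorial : ℕ) : ℝ) := by
      have := Nat.mul_pos n.factorial_pos M.factorial_pos
      exact_mod_cast this
    have hnum : 0 ≤ lam ^ (n + M) := pow_nonneg hl _
    have h1 : lam ^ (n + M) / ((n + M).factorial : ℝ)
        ≤ lam ^ (n + M) / ((n.factorial * M.factorial : ℕ) : ℝ) :=
      div_le_div_of_nonneg_left hnum hprodpos hle
    calc Real.exp (-lam) * (lam ^ (n + M) / ((n + M).factorial : ℝ))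
        ≤ Real.exp (-lam) * (lam ^ (n + M) / ((n.factorial * M.factorial : ℕ) : ℝ)) :=
          mul_le_mul_of_nonneg_left h1 (Real.exp_pos _).le
      _ = lam ^ M / M.factorial * (Real.exp (-lam) * (lam ^ n / n.factorial)) := by
          push_cast
          rw [pow_add]
          have hnf : (n.factorial : ℝ) ≠ 0 := Nat.cast_ne_zero.mpr n.factorial_ne_zero
          have hMf : (M.factorial : ℝ) ≠ 0 := Nat.cast_ne_zero.mpr M.factorial_ne_zero
          field_simp
  have hs1 : Summable (fun n : ℕ => poissonP lam (n + M)) :=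
    (summable_nat_add_iff M).mpr (pois_summable lam)
  have hs2 : Summable (fun n : ℕ =>
      lam ^ M / M.factorial * (Real.exp (-lam) * (lam ^ n / n.factorial))) :=
    (((Real.summable_pow_div_factorial lam).mul_left _).mul_left _)
  calc ∑' n, poissonP lam (n + M)
      ≤ ∑' n : ℕ, lam ^ M / M.factorial * (Real.exp (-lam) * (lam ^ n / n.factorial)) :=
        Summable.tsum_le_tsum hterm hs1 hs2
    _ = lam ^ M / M.factorial * (Real.exp (-lam) * Real.exp lam) := by
        rw [tsum_mul_left, tsum_mul_left, exp_tsum]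
    _ = lam ^ M / M.factorial := by rw [← Real.exp_add]; simp

lemma pois_chernoff {lam : ℝ} (hl : 0 < lam) {M : ℕ} (hM : 1 ≤ M)
    (h10 : lam ≤ (M : ℝ) / 10) :
    ∑' n, poissonP lam (n + M) ≤ Real.exp (-(M : ℝ)) := by
  have hMf : (0 : ℝ) < (M.factorial : ℝ) := by exact_mod_cast M.factorial_pos
  have hMR : (0 : ℝ) < (M : ℝ) := by exact_mod_cast hM
  have e3 : (M : ℝ) ^ M / M.factorial ≤ Real.exp (M : ℝ) := by
    rw [← exp_tsum (M : ℝ)]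
    exact Summable.le_tsum (Real.summable_pow_div_factorial (M : ℝ)) M
      (fun j _ => by positivity)
  have e1 : lam ^ M ≤ ((M : ℝ) / 10) ^ M := pow_le_pow_left₀ hl.le h10 M
  have h10pos : (0 : ℝ) < 10 ^ M := by positivity
  have hexpsq : Real.exp (M : ℝ) * Real.exp (M : ℝ) ≤ 10 ^ M := by
    have he1 : Real.exp (M : ℝ) = Real.exp 1 ^ M := by
      rw [← Real.exp_nat_mul]; norm_num
    have he2 : Real.exp 1 * Real.exp 1 ≤ 10 := by
      nlinarith [Real.exp_one_lt_d9, Real.exp_pos 1]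
    calc Real.exp (M : ℝ) * Real.exp (M : ℝ) = (Real.exp 1 * Real.exp 1) ^ M := by
          rw [he1, mul_pow]
      _ ≤ 10 ^ M := pow_le_pow_left₀ (by positivity) he2 M
  have hfinal : ((M : ℝ) / 10) ^ M / M.factorial ≤ Real.exp (-(M : ℝ)) := by
    rw [div_pow, Real.exp_neg]
    rw [div_div, div_le_iff₀ (by positivity), inv_mul_eq_div, le_div_iff₀ (Real.exp_pos _)]
    calc (M : ℝ) ^ M * Real.exp (M : ℝ)
        ≤ Real.exp (M : ℝ) * (M.factorial : ℝ) * Real.exp (M : ℝ) := by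
          nlinarith [e3, (div_le_iff₀ hMf).mp e3, Real.exp_pos (M : ℝ)]
      _ ≤ 10 ^ M * (M.factorial : ℝ) := by nlinarith [hexpsq, hMf.le]
  calc ∑' n, poissonP lam (n + M) ≤ lam ^ M / M.factorial := pois_tail_le_pow hl.le M
    _ ≤ ((M : ℝ) / 10) ^ M / M.factorial := by
        exact (div_le_div_iff_of_pos_right hMf).mpr e1
    _ ≤ Real.exp (-(M : ℝ)) := hfinal

end PoisAux



/-- for `G̃ ~ Poisson(λ)` with `0 < λ ≤ M - 1`,
`E[(G̃/M)·log(G̃/M)·1{G̃ > M}] ≤ (λ^{3/2}/M²)·√(P[G̃ ≥ M])`; consequently, if moreover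
`λ ≤ M/10`, then for `f(g) = -(g/M)·log(g/M)` and `f⁺ = max(f, 0)` one has
`0 ≤ E[f⁺(G̃)] - E[f(G̃)] ≤ e^{-M/2}`. -/
theorem poisson_truncation_bound (M : ℕ) (hM : 1 ≤ M) (lam : ℝ)
    (hlam : 0 < lam) (hlamM : lam ≤ (M : ℝ) - 1) :
    (∑' g : ℕ, {g : ℕ | M < g}.indicator
        (fun g => poissonP lam g * (((g : ℝ) / M) * Real.log ((g : ℝ) / M))) g) ≤
      lam ^ ((3 : ℝ) / 2) / (M : ℝ) ^ 2 *
        Real.sqrt (∑' g : ℕ, {g : ℕ | M ≤ g}.indicator (poissonP lam) g) ∧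
    (lam ≤ (M : ℝ) / 10 →
      0 ≤ (∑' g : ℕ, poissonP lam g * max (-((g : ℝ) / M) * Real.log ((g : ℝ) / M)) 0)
          - (∑' g : ℕ, poissonP lam g * (-((g : ℝ) / M) * Real.log ((g : ℝ) / M))) ∧
      (∑' g : ℕ, poissonP lam g * max (-((g : ℝ) / M) * Real.log ((g : ℝ) / M)) 0)
          - (∑' g : ℕ, poissonP lam g * (-((g : ℝ) / M) * Real.log ((g : ℝ) / M)))
        ≤ Real.exp (-(M : ℝ) / 2)) := by
  have hl0 : 0 ≤ lam := hlam.le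
  have hM1 : (1 : ℝ) ≤ (M : ℝ) := by exact_mod_cast hM
  have hMpos : (0 : ℝ) < (M : ℝ) := by linarith
  have hMne : (M : ℝ) ≠ 0 := ne_of_gt hMpos
  -- bound on |Φ g|
  have hφbound : ∀ g : ℕ, |((g : ℝ) / M) * Real.log ((g : ℝ) / M)| ≤ 2 * ((g : ℝ) ^ 2 + 1) := by
    intro g
    rcases Nat.eq_zero_or_pos g with h0 | hpos
    · subst h0; norm_num
    · have hg1 : (1 : ℝ) ≤ (g : ℝ) := by exact_mod_cast hpos
      have hx : (0 : ℝ) < (g : ℝ) / M := by positivity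
      have hxle : (g : ℝ) / M ≤ (g : ℝ) := div_le_self (by linarith) hM1
      have hlogup : Real.log ((g : ℝ) / M) ≤ (g : ℝ) / M - 1 :=
        Real.log_le_sub_one_of_pos hx
      have hinv : ((g : ℝ) / M)⁻¹ = (M : ℝ) / g := by
        rw [inv_div]
      have hlogdown : -Real.log ((g : ℝ) / M) ≤ (M : ℝ) := by
        have h1 : Real.log (((g : ℝ) / M)⁻¹) ≤ ((g : ℝ) / M)⁻¹ - 1 :=
          Real.log_le_sub_one_of_pos (by positivity)
        rw [Real.log_inv] at h1
        have h2 : (M : ℝ) / g ≤ (M : ℝ) := div_le_self hMpos.le hg1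
        rw [hinv] at h1
        linarith
      have habs : |Real.log ((g : ℝ) / M)| ≤ (g : ℝ) + M := by
        rw [abs_le]
        constructor
        · have : (0:ℝ) ≤ (g:ℝ) := by linarith
          linarith
        · linarith
      rw [abs_mul, abs_of_pos hx]
      have hxM : (g : ℝ) / M * (M : ℝ) = (g : ℝ) := div_mul_cancel₀ _ hMne
      calc (g : ℝ) / M * |Real.log ((g : ℝ) / M)|
          ≤ (g : ℝ) / M * ((g : ℝ) + M) := mul_le_mul_of_nonneg_left habs hx.le
        _ = (g : ℝ) / M * (g : ℝ) + (g : ℝ) := by rw [mul_add, hxM]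
        _ ≤ (g : ℝ) * (g : ℝ) + (g : ℝ) := by
            have := mul_le_mul_of_nonneg_right hxle (by linarith : (0:ℝ) ≤ (g:ℝ))
            linarith
        _ ≤ 2 * ((g : ℝ) ^ 2 + 1) := by nlinarith [hg1]
  have hSfull : Summable (fun g => poissonP lam g * (((g : ℝ) / M) * Real.log ((g : ℝ) / M))) :=
    PoisAux.summable_p_mul hl0 hφbound
  -- the indicator function equals p * max(Φ, 0)
  have hindpt : ∀ g : ℕ, {g : ℕ | M < g}.indicator
      (fun g => poissonP lam g * (((g : ℝ) / M) * Real.log ((g : ℝ) / M))) g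
      = poissonP lam g * max (((g : ℝ) / M) * Real.log ((g : ℝ) / M)) 0 := by
    intro g
    by_cases h : M < g
    · have hMg : (M : ℝ) ≤ (g : ℝ) := by exact_mod_cast h.le
      have h1 : (1 : ℝ) ≤ (g : ℝ) / M := (one_le_div hMpos).mpr hMg
      have hφnn : 0 ≤ ((g : ℝ) / M) * Real.log ((g : ℝ) / M) :=
        mul_nonneg (by positivity) (Real.log_nonneg h1)
      have hmem : g ∈ {g : ℕ | M < g} := h
      rw [Set.indicator_of_mem hmem, max_eq_left hφnn]
    · push_neg at h
      have hgM : (g : ℝ) ≤ (M : ℝ) := by exact_mod_cast h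
      have hle1 : (g : ℝ) / M ≤ 1 := (div_le_one hMpos).mpr hgM
      have hφnp : ((g : ℝ) / M) * Real.log ((g : ℝ) / M) ≤ 0 :=
        mul_nonpos_of_nonneg_of_nonpos (by positivity)
          (Real.log_nonpos (by positivity) hle1)
      have hmem : g ∉ {g : ℕ | M < g} := by simp only [Set.mem_setOf_eq]; omega
      rw [Set.indicator_of_notMem hmem, max_eq_right hφnp, mul_zero]
  -- rewrite LHS as shifted sum
  have hset : {g : ℕ | M < g} = {g : ℕ | M + 1 ≤ g} := rfl
  have hLHSeq : (∑' g : ℕ, {g : ℕ | M < g}.indicator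
      (fun g => poissonP lam g * (((g : ℝ) / M) * Real.log ((g : ℝ) / M))) g)
      = ∑' n : ℕ, poissonP lam (n + (M + 1)) *
          (((n + (M + 1) : ℕ) : ℝ) / M * Real.log (((n + (M + 1) : ℕ) : ℝ) / M)) := by
    rw [hset]
    exact PoisAux.tsum_indicator_tail hSfull (M + 1)
  have hTeq : (∑' g : ℕ, {g : ℕ | M ≤ g}.indicator (poissonP lam) g)
      = ∑' n : ℕ, poissonP lam (n + M) :=
    PoisAux.tsum_indicator_tail (PoisAux.pois_summable lam) M
  set T : ℝ := ∑' n : ℕ, poissonP lam (n + M) with hTdef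
  have hT0 : 0 ≤ T := tsum_nonneg fun n => PoisAux.poissonP_nonneg hl0 _
  -- summability of the shifted first/second moment quantities
  have hbase1 : Summable (fun g : ℕ => poissonP lam g * ((g : ℝ) + 1 - M)) := by
    refine PoisAux.summable_p_mul hl0 (C := (M : ℝ) + 2) fun g => ?_
    have hg0 : (0 : ℝ) ≤ (g : ℝ) := Nat.cast_nonneg g
    rw [abs_le]
    constructor <;> nlinarith [sq_nonneg ((g : ℝ) - 1), sq_nonneg (g : ℝ)]
  have hC_sum : Summable (fun n : ℕ => poissonP lam (n + M) * ((n : ℝ) + 1)) := by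
    refine ((summable_nat_add_iff M).mpr hbase1).congr fun n => ?_
    push_cast; ring
  have hbase2 : Summable (fun g : ℕ => poissonP lam g * ((g : ℝ) - ((M : ℝ) - 1)) ^ 2) := by
    refine PoisAux.summable_p_mul hl0 (C := 2 * ((M : ℝ) - 1) ^ 2 + 2) fun g => ?_
    have hg0 : (0 : ℝ) ≤ (g : ℝ) := Nat.cast_nonneg g
    rw [abs_of_nonneg (sq_nonneg _)]
    nlinarith [sq_nonneg ((g : ℝ) + ((M : ℝ) - 1)), sq_nonneg (g : ℝ), sq_nonneg ((M : ℝ) - 1)]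
  have hD_sum : Summable (fun n : ℕ => poissonP lam (n + M) * ((n : ℝ) + 1) ^ 2) := by
    refine ((summable_nat_add_iff M).mpr hbase2).congr fun n => ?_
    push_cast; ring
  have hw_sum : Summable (fun n : ℕ => poissonP lam (n + M)) :=
    (summable_nat_add_iff M).mpr (PoisAux.pois_summable lam)
  set C : ℝ := ∑' n : ℕ, poissonP lam (n + M) * ((n : ℝ) + 1) with hCdef
  set D : ℝ := ∑' n : ℕ, poissonP lam (n + M) * ((n : ℝ) + 1) ^ 2 with hDdef
  -- Step 1 : A ≤ lam/M² * C
  have hstep1 : (∑' n : ℕ, poissonP lam (n + (M + 1)) *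
          (((n + (M + 1) : ℕ) : ℝ) / M * Real.log (((n + (M + 1) : ℕ) : ℝ) / M)))
      ≤ lam / (M : ℝ) ^ 2 * C := by
    have hterm : ∀ n : ℕ, poissonP lam (n + (M + 1)) *
          (((n + (M + 1) : ℕ) : ℝ) / M * Real.log (((n + (M + 1) : ℕ) : ℝ) / M))
        ≤ lam / (M : ℝ) ^ 2 * (poissonP lam (n + M) * ((n : ℝ) + 1)) := by
      intro n
      have hpn : 0 ≤ poissonP lam (n + (M + 1)) := PoisAux.poissonP_nonneg hl0 _
      have hxpos : (0 : ℝ) < ((n + (M + 1) : ℕ) : ℝ) / M := by positivity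
      have hlog : Real.log (((n + (M + 1) : ℕ) : ℝ) / M)
          ≤ ((n + (M + 1) : ℕ) : ℝ) / M - 1 := Real.log_le_sub_one_of_pos hxpos
      have h1 : poissonP lam (n + (M + 1)) *
            (((n + (M + 1) : ℕ) : ℝ) / M * Real.log (((n + (M + 1) : ℕ) : ℝ) / M))
          ≤ poissonP lam (n + (M + 1)) *
            (((n + (M + 1) : ℕ) : ℝ) / M * (((n + (M + 1) : ℕ) : ℝ) / M - 1)) := by
        apply mul_le_mul_of_nonneg_left _ hpn
        exact mul_le_mul_of_nonneg_left hlog hxpos.le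
      refine h1.trans (le_of_eq ?_)
      have hsucc := PoisAux.pois_succ lam (n + M)
      have hix : n + (M + 1) = (n + M) + 1 := by omega
      rw [hix]
      push_cast at hsucc ⊢
      have hkey : ((n : ℝ) + ↑M + 1) / ↑M * (((n : ℝ) + ↑M + 1) / ↑M - 1)
          = ((n : ℝ) + 1) * ((n : ℝ) + ↑M + 1) / (M : ℝ) ^ 2 := by
        field_simp
        ring
      rw [hkey]
      calc poissonP lam (n + M + 1) * (((n : ℝ) + 1) * ((n : ℝ) + ↑M + 1) / (M : ℝ) ^ 2)
          = (poissonP lam (n + M + 1) * ((n : ℝ) + ↑M + 1)) * (((n : ℝ) + 1) / (M : ℝ) ^ 2) := by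
            ring
        _ = (lam * poissonP lam (n + M)) * (((n : ℝ) + 1) / (M : ℝ) ^ 2) := by rw [hsucc]
        _ = lam / (M : ℝ) ^ 2 * (poissonP lam (n + M) * ((n : ℝ) + 1)) := by ring
    calc (∑' n : ℕ, poissonP lam (n + (M + 1)) *
          (((n + (M + 1) : ℕ) : ℝ) / M * Real.log (((n + (M + 1) : ℕ) : ℝ) / M)))
        ≤ ∑' n : ℕ, lam / (M : ℝ) ^ 2 * (poissonP lam (n + M) * ((n : ℝ) + 1)) :=
          Summable.tsum_le_tsum hterm ((summable_nat_add_iff (M + 1)).mpr hSfull)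
            (hC_sum.mul_left _)
      _ = lam / (M : ℝ) ^ 2 * C := by rw [tsum_mul_left, ← hCdef]
  -- Step 2 : Cauchy–Schwarz
  have hCS : C ≤ Real.sqrt D * Real.sqrt T := by
    rw [hCdef, hDdef, hTdef]
    exact PoisAux.tsum_cs (fun n => PoisAux.poissonP_nonneg hl0 _)
      (fun n => by positivity) hC_sum hD_sum hw_sum
  -- Step 3 : D ≤ lam
  have hD : D ≤ lam := by
    set a : ℝ := (M : ℝ) - 1 with hadef
    have halam : 0 ≤ a - lam := by simp only [hadef]; linarith
    have hDeq : D = ∑' n : ℕ, poissonP lam (n + M) * (((n + M : ℕ) : ℝ) - a) ^ 2 := by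
      rw [hDdef]
      refine tsum_congr fun n => ?_
      have : ((n + M : ℕ) : ℝ) - a = (n : ℝ) + 1 := by push_cast [hadef]; ring
      rw [this]
    have hsplitG := Summable.sum_add_tsum_nat_add
      (f := fun g : ℕ => poissonP lam g * ((g : ℝ) - a) ^ 2) M hbase2
    have htot : ∑' g : ℕ, poissonP lam g * ((g : ℝ) - a) ^ 2 = lam + (lam - a) ^ 2 :=
      PoisAux.pois_mom2 lam a
    set L : ℝ := ∑ i ∈ range M, poissonP lam i * ((i : ℝ) - a) ^ 2 with hLdef
    have hL0 : 0 ≤ L := Finset.sum_nonneg fun i _ =>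
      mul_nonneg (PoisAux.poissonP_nonneg hl0 i) (sq_nonneg _)
    -- lower bound for L
    have hsum1 : Summable (fun n : ℕ => poissonP lam n * (a - (n : ℝ))) := by
      refine PoisAux.summable_p_mul hl0 (C := |a| + 2) fun g => ?_
      have hg0 : (0 : ℝ) ≤ (g : ℝ) := Nat.cast_nonneg g
      have h1 : |a - (g : ℝ)| ≤ |a| + (g : ℝ) := by
        calc |a - (g : ℝ)| ≤ |a| + |(g : ℝ)| := abs_sub _ _
          _ = |a| + (g : ℝ) := by rw [abs_of_nonneg hg0]
      refine h1.trans ?_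
      nlinarith [abs_nonneg a, sq_nonneg ((g : ℝ) - 1)]
    have hsplit1 := Summable.sum_add_tsum_nat_add
      (f := fun n : ℕ => poissonP lam n * (a - (n : ℝ))) M hsum1
    have hm1 : ∑' n : ℕ, poissonP lam n * (a - (n : ℝ)) = a - lam := PoisAux.pois_mom1 lam a
    have htail1 : ∑' n : ℕ, poissonP lam (n + M) * (a - ((n + M : ℕ) : ℝ)) ≤ 0 := by
      refine tsum_nonpos fun n => ?_
      apply mul_nonpos_of_nonneg_of_nonpos (PoisAux.poissonP_nonneg hl0 _)
      have : (M : ℝ) ≤ ((n + M : ℕ) : ℝ) := by push_cast; linarith [Nat.cast_nonneg (α := ℝ) n]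
      simp only [hadef]; linarith
    have h1 : a - lam ≤ ∑ i ∈ range M, poissonP lam i * (a - (i : ℝ)) := by
      rw [hm1] at hsplit1
      linarith [htail1, hsplit1]
    have h2 : (∑ i ∈ range M, poissonP lam i * (a - (i : ℝ))) ^ 2
        ≤ (∑ i ∈ range M, poissonP lam i) * L := by
      have hcs := sum_mul_sq_le_sq_mul_sq (range M)
        (fun i => Real.sqrt (poissonP lam i) * (a - (i : ℝ)))
        (fun i => Real.sqrt (poissonP lam i))
      have e1 : ∑ i ∈ range M, (Real.sqrt (poissonP lam i) * (a - (i : ℝ)))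
            * Real.sqrt (poissonP lam i) = ∑ i ∈ range M, poissonP lam i * (a - (i : ℝ)) := by
        refine Finset.sum_congr rfl fun i _ => ?_
        have hh := Real.mul_self_sqrt (PoisAux.poissonP_nonneg hl0 i)
        linear_combination (a - (i : ℝ)) * hh
      have e2 : ∑ i ∈ range M, (Real.sqrt (poissonP lam i) * (a - (i : ℝ))) ^ 2
          = L := by
        rw [hLdef]
        refine Finset.sum_congr rfl fun i _ => ?_
        rw [mul_pow, Real.sq_sqrt (PoisAux.poissonP_nonneg hl0 i)]
        ring
      have e3 : ∑ i ∈ range M, (Real.sqrt (poissonP lam i)) ^ 2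
          = ∑ i ∈ range M, poissonP lam i := by
        refine Finset.sum_congr rfl fun i _ => ?_
        rw [Real.sq_sqrt (PoisAux.poissonP_nonneg hl0 i)]
      rw [e1, e2, e3] at hcs
      linarith [hcs]
    have h3 : ∑ i ∈ range M, poissonP lam i ≤ 1 := by
      have := Summable.sum_le_tsum (range M) (fun i _ => PoisAux.poissonP_nonneg hl0 i)
        (PoisAux.pois_summable lam)
      rw [PoisAux.pois_tsum lam] at this
      exact this
    have hLlow : (a - lam) ^ 2 ≤ L := by
      have hp1 : (a - lam) ^ 2 ≤ (∑ i ∈ range M, poissonP lam i * (a - (i : ℝ))) ^ 2 :=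
        pow_le_pow_left₀ halam h1 2
      have hp2 : (∑ i ∈ range M, poissonP lam i) * L ≤ L :=
        mul_le_of_le_one_left hL0 h3
      linarith
    have hsq : (lam - a) ^ 2 = (a - lam) ^ 2 := by ring
    rw [htot] at hsplitG
    rw [hDeq]
    have hfin : (∑' n : ℕ, poissonP lam (n + M) * (((n + M : ℕ) : ℝ) - a) ^ 2)
        = lam + (lam - a) ^ 2 - L := by
      linarith [hsplitG]
    rw [hfin, hsq]
    linarith
  -- assemble part 1
  have hfrac0 : 0 ≤ lam / (M : ℝ) ^ 2 := by positivity
  have h32 : lam ^ ((3 : ℝ) / 2) = Real.sqrt lam * lam := by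
    have : lam ^ ((3 : ℝ) / 2) = lam ^ ((1 : ℝ) / 2 + 1) := by norm_num
    rw [this, Real.rpow_add hlam, Real.rpow_one, Real.sqrt_eq_rpow]
  have hpart1 : (∑' g : ℕ, {g : ℕ | M < g}.indicator
      (fun g => poissonP lam g * (((g : ℝ) / M) * Real.log ((g : ℝ) / M))) g)
      ≤ lam ^ ((3 : ℝ) / 2) / (M : ℝ) ^ 2 * Real.sqrt T := by
    rw [hLHSeq]
    calc (∑' n : ℕ, poissonP lam (n + (M + 1)) *
          (((n + (M + 1) : ℕ) : ℝ) / M * Real.log (((n + (M + 1) : ℕ) : ℝ) / M)))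
        ≤ lam / (M : ℝ) ^ 2 * C := hstep1
      _ ≤ lam / (M : ℝ) ^ 2 * (Real.sqrt D * Real.sqrt T) := by
          apply mul_le_mul_of_nonneg_left hCS hfrac0
      _ ≤ lam / (M : ℝ) ^ 2 * (Real.sqrt lam * Real.sqrt T) := by
          apply mul_le_mul_of_nonneg_left _ hfrac0
          exact mul_le_mul_of_nonneg_right (Real.sqrt_le_sqrt hD) (Real.sqrt_nonneg _)
      _ = lam ^ ((3 : ℝ) / 2) / (M : ℝ) ^ 2 * Real.sqrt T := by
          rw [h32]; ring
  constructor
  · rw [hTeq]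
    exact hpart1
  -- part 2
  intro h10
  have hmaxb : ∀ g : ℕ, |max (-((g : ℝ) / M) * Real.log ((g : ℝ) / M)) 0|
      ≤ 2 * ((g : ℝ) ^ 2 + 1) := by
    intro g
    have h := hφbound g
    have : |max (-((g : ℝ) / M) * Real.log ((g : ℝ) / M)) 0|
        ≤ |(-((g : ℝ) / M)) * Real.log ((g : ℝ) / M)| := by
      rcases le_total ((-((g : ℝ) / M)) * Real.log ((g : ℝ) / M)) 0 with hc | hc
      · rw [max_eq_right hc]; simp; exact mul_nonneg (abs_nonneg _) (abs_nonneg _)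
      · rw [max_eq_left hc]
    refine this.trans ?_
    rw [neg_mul, abs_neg]
    exact h
  have hfb : ∀ g : ℕ, |(-((g : ℝ) / M)) * Real.log ((g : ℝ) / M)| ≤ 2 * ((g : ℝ) ^ 2 + 1) := by
    intro g; rw [neg_mul, abs_neg]; exact hφbound g
  have hmaxsum : Summable (fun g : ℕ =>
      poissonP lam g * max (-((g : ℝ) / M) * Real.log ((g : ℝ) / M)) 0) :=
    PoisAux.summable_p_mul hl0 hmaxb
  have hfsum : Summable (fun g : ℕ =>
      poissonP lam g * (-((g : ℝ) / M) * Real.log ((g : ℝ) / M))) :=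
    PoisAux.summable_p_mul hl0 hfb
  have hdiff : (∑' g : ℕ, poissonP lam g * max (-((g : ℝ) / M) * Real.log ((g : ℝ) / M)) 0)
      - (∑' g : ℕ, poissonP lam g * (-((g : ℝ) / M) * Real.log ((g : ℝ) / M)))
      = ∑' g : ℕ, {g : ℕ | M < g}.indicator
          (fun g => poissonP lam g * (((g : ℝ) / M) * Real.log ((g : ℝ) / M))) g := by
    rw [← Summable.tsum_sub hmaxsum hfsum]
    refine tsum_congr fun g => ?_
    rw [hindpt g]
    set y : ℝ := ((g : ℝ) / M) * Real.log ((g : ℝ) / M) with hydef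
    have hneg : -((g : ℝ) / M) * Real.log ((g : ℝ) / M) = -y := by rw [hydef]; ring
    rw [hneg]
    rcases le_total y 0 with hc | hc
    · rw [max_eq_left (by linarith : 0 ≤ -y), max_eq_right hc]; ring
    · rw [max_eq_right (by linarith : -y ≤ 0), max_eq_left hc]; ring
  rw [hdiff]
  constructor
  · refine tsum_nonneg fun g => ?_
    rw [hindpt g]
    exact mul_nonneg (PoisAux.poissonP_nonneg hl0 g) (le_max_right _ _)
  · have hchern : T ≤ Real.exp (-(M : ℝ)) := PoisAux.pois_chernoff hlam hM h10
    have hsqrtT : Real.sqrt T ≤ Real.exp (-(M : ℝ) / 2) := by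
      have hexpeq : Real.exp (-(M : ℝ)) = Real.exp (-(M : ℝ) / 2) * Real.exp (-(M : ℝ) / 2) := by
        rw [← Real.exp_add]; ring_nf
      calc Real.sqrt T ≤ Real.sqrt (Real.exp (-(M : ℝ))) := Real.sqrt_le_sqrt hchern
        _ = Real.exp (-(M : ℝ) / 2) := by
            rw [hexpeq, Real.sqrt_mul_self (Real.exp_pos _).le]
    have hfrac1 : lam ^ ((3 : ℝ) / 2) / (M : ℝ) ^ 2 ≤ 1 := by
      rw [div_le_one (by positivity)]
      have hlM : lam ≤ (M : ℝ) := by linarith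
      calc lam ^ ((3 : ℝ) / 2) ≤ (M : ℝ) ^ ((3 : ℝ) / 2) :=
            Real.rpow_le_rpow hl0 hlM (by norm_num)
        _ ≤ (M : ℝ) ^ (2 : ℝ) := Real.rpow_le_rpow_of_exponent_le hM1 (by norm_num)
        _ = (M : ℝ) ^ 2 := by
            rw [show (2 : ℝ) = ((2 : ℕ) : ℝ) by norm_num, Real.rpow_natCast]
    calc (∑' g : ℕ, {g : ℕ | M < g}.indicator
          (fun g => poissonP lam g * (((g : ℝ) / M) * Real.log ((g : ℝ) / M))) g)
        ≤ lam ^ ((3 : ℝ) / 2) / (M : ℝ) ^ 2 * Real.sqrt T := hpart1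
      _ ≤ 1 * Real.exp (-(M : ℝ) / 2) :=
          mul_le_mul hfrac1 hsqrtT (Real.sqrt_nonneg _) zero_le_one
      _ = Real.exp (-(M : ℝ) / 2) := one_mul _
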